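/- For every lattice Γ ⊂ R^l, every Ω ∈ R^l, and every δ > 0, the ergodization time satisfies the lower bound T(Γ, Ω, δ) ≥ (1/4) · (α(Γ, Ω, 1/(4δ)))^{-1}. -/
import Mathlib

/-!
Statement 4: lower bound on the ergodization time (Lemma `lem:ergo2`, second part).
`T(Γ, Ω, δ) ≥ (1/4) · (α(Γ, Ω, 1/(4δ)))⁻¹`, with values in `ℝ≥0∞` (so that `inf ∅ = +∞`).
A lattice of `ℝ^l` is a discrete subgroup with finite covolume, i.e. a discrete
subgroup spanning `ℝ^l` over `ℝ`.
-/

open Real Filter MeasureTheory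
open scoped ENNReal RealInnerProductSpace

/-- The ergodization time `T(Γ, Ω, δ)` required by the flow `{Ωt}` to fill the torus
`ℝ^l/Γ` within `δ`; valued in `ℝ≥0∞`, with the convention `inf ∅ = +∞`. -/
noncomputable def ergoTime {l : ℕ} (Γ : AddSubgroup (EuclideanSpace ℝ (Fin l)))
    (Ω : EuclideanSpace ℝ (Fin l)) (δ : ℝ) : ℝ≥0∞ :=
  sInf (ENNReal.ofReal '' {t : ℝ | 0 ≤ t ∧
    ∀ x : EuclideanSpace ℝ (Fin l), ∃ s ∈ Set.Icc (0:ℝ) t, ∃ g ∈ Γ,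
      dist x (s • Ω + g) ≤ δ})

/-- `α(Γ, Ω, R) = inf { |p·Ω| : p ∈ Γ*_R }`, where
`Γ*_R = { p : 0 < |p| ≤ R, p·γ ∈ ℤ for all γ ∈ Γ }`; valued in `ℝ≥0∞`,
with the convention `inf ∅ = +∞`. -/
noncomputable def dualAlpha {l : ℕ} (Γ : AddSubgroup (EuclideanSpace ℝ (Fin l)))
    (Ω : EuclideanSpace ℝ (Fin l)) (R : ℝ) : ℝ≥0∞ :=
  sInf (ENNReal.ofReal '' {a : ℝ | ∃ p : EuclideanSpace ℝ (Fin l),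
    0 < ‖p‖ ∧ ‖p‖ ≤ R ∧ (∀ g ∈ Γ, ∃ k : ℤ, ⟪p, g⟫ = (k : ℝ)) ∧ a = |⟪p, Ω⟫|})


theorem ergodization_time_lower_bound (l : ℕ)
    (Γ : AddSubgroup (EuclideanSpace ℝ (Fin l)))
    (hdisc : DiscreteTopology Γ)
    (hspan : Submodule.span ℝ (Γ : Set (EuclideanSpace ℝ (Fin l))) = ⊤)
    (Ω : EuclideanSpace ℝ (Fin l)) (δ : ℝ) (hδ : 0 < δ) :
    ENNReal.ofReal (1 / 4) * (dualAlpha Γ Ω (1 / (4 * δ)))⁻¹ ≤ ergoTime Γ Ω δ := by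
  rw [ergoTime]
  refine le_sInf ?_
  rintro _ ⟨t, ⟨ht0, hcov⟩, rfl⟩
  rw [dualAlpha, ENNReal.inv_sInf]
  simp only [ENNReal.mul_iSup]
  refine iSup₂_le ?_
  rintro _ ⟨a, ⟨p, hp0, hpR, hint, rfl⟩, rfl⟩
  -- key real inequality: 1/4 ≤ t * |⟪p, Ω⟫|
  set c := ⟪p, Ω⟫ with hc
  have hkey : (1:ℝ)/4 ≤ t * |c| := by
    set x : EuclideanSpace ℝ (Fin l) := (2 * ‖p‖ ^ 2)⁻¹ • p with hx
    have hpx : ⟪p, x⟫ = 1 / 2 := by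
      rw [hx, real_inner_smul_right, real_inner_self_eq_norm_sq]
      field_simp
    obtain ⟨s, ⟨hs0, hst⟩, g, hg, hdist⟩ := hcov x
    obtain ⟨k, hk⟩ := hint g hg
    have hCS : |⟪p, x - (s • Ω + g)⟫| ≤ ‖p‖ * ‖x - (s • Ω + g)‖ :=
      abs_real_inner_le_norm p _
    have hnorm : ‖x - (s • Ω + g)‖ ≤ δ := by rwa [← dist_eq_norm]
    have hbound : |⟪p, x - (s • Ω + g)⟫| ≤ 1 / 4 := by
      have h1 : ‖p‖ * ‖x - (s • Ω + g)‖ ≤ (1 / (4 * δ)) * δ := by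
        apply mul_le_mul hpR hnorm (norm_nonneg _) (by positivity)
      have h2 : (1 / (4 * δ)) * δ = 1 / 4 := by field_simp
      linarith [hCS]
    have hexp : ⟪p, x - (s • Ω + g)⟫ = 1 / 2 - s * c - k := by
      rw [inner_sub_right, inner_add_right, real_inner_smul_right, hk,
        real_inner_smul_right, real_inner_self_eq_norm_sq, ← hc]
      field_simp
      ring
    rw [hexp] at hbound
    have hkabs : (1:ℝ)/2 ≤ |1/2 - (k:ℝ)| := by
      rcases le_or_gt (k:ℤ) 0 with h | h
      · have : (k:ℝ) ≤ 0 := by exact_mod_cast h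
        rw [abs_of_nonneg (by linarith)]; linarith
      · have : (1:ℝ) ≤ (k:ℝ) := by exact_mod_cast h
        rw [abs_of_nonpos (by linarith)]; linarith
    have hsabs : (1:ℝ)/4 ≤ s * |c| := by
      have h3 : |1/2 - (k:ℝ)| - |s * c| ≤ |1/2 - s * c - k| := by
        have := abs_sub_abs_le_abs_sub (1/2 - (k:ℝ)) (s * c)
        have heq : (1/2 - (k:ℝ)) - s * c = 1/2 - s * c - k := by ring
        rwa [heq] at this
      rw [abs_mul, abs_of_nonneg hs0] at h3
      linarith
    have : s * |c| ≤ t * |c| := by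
      apply mul_le_mul_of_nonneg_right hst (abs_nonneg _)
    linarith
  have hcpos : 0 < |c| := by
    by_contra h
    push_neg at h
    have : |c| = 0 := le_antisymm h (abs_nonneg _)
    rw [this, mul_zero] at hkey; linarith
  have ht : (1:ℝ)/4 / |c| ≤ t := by
    rw [div_le_iff₀ hcpos]; linarith [hkey]
  calc ENNReal.ofReal (1/4) * (ENNReal.ofReal |c|)⁻¹
      = ENNReal.ofReal ((1/4) / |c|) := by
        rw [ENNReal.ofReal_div_of_pos hcpos]; rfl
    _ ≤ ENNReal.ofReal t := ENNReal.ofReal_le_ofReal ht
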